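/- Let a > 0 and let φ : [0,a] → ℝ be an increasing, concave, continuous function with φ(0) = 0 and φ(a) = 1. If f is an extreme point of the closed unit ball of the Lorentz space Λ(φ)[0,a], then there exist a measurable set E ⊆ [0,a] with m(E) > 0 and a measurable function ε : [0,a] → ℂ with |ε(t)| = 1 for a.e. t, such that f(t) = (ε(t)/φ(m(E))) · χ_E(t) for a.e. t ∈ [0,a], where χ_E is the indicator function of E. -/

import Mathlib

open MeasureTheory Set Filter Topology
open scoped ENNReal NNReal Classical

noncomputable section

/-- The distribution function `m {s ∈ [0,a] : τ < ‖f s‖}` of `f` on `[0,a]`. -/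
def distrib {E : Type*} [NormedAddCommGroup E] (a : ℝ) (f : ℝ → E) (τ : ℝ) : ℝ≥0∞ :=
  volume {s ∈ Set.Icc (0:ℝ) a | τ < ‖f s‖}

/-- The decreasing rearrangement `f*` of `f` on `[0,a]`:
`f*(t) = inf {τ ≥ 0 : m {s ∈ [0,a] : ‖f s‖ > τ} ≤ t}`. -/
def rearr {E : Type*} [NormedAddCommGroup E] (a : ℝ) (f : ℝ → E) (t : ℝ) : ℝ :=
  sInf {τ : ℝ | 0 ≤ τ ∧ distrib a f τ ≤ ENNReal.ofReal t}

/-- The clamp of `t : ℝ` to the interval `[0,a]`. -/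
def clampIcc (a t : ℝ) : ℝ := min (max t 0) a

lemma clampIcc_mem (a t : ℝ) (ha : 0 ≤ a) : clampIcc a t ∈ Set.Icc (0:ℝ) a :=
  ⟨le_min (le_max_right t 0) ha, min_le_right _ _⟩

lemma clampIcc_mono (a : ℝ) : Monotone (clampIcc a) := fun _ _ hst =>
  min_le_min (max_le_max hst le_rfl) le_rfl

lemma clampIcc_continuous (a : ℝ) : Continuous (clampIcc a) :=
  (continuous_id.max continuous_const).min continuous_const

/-- The Stieltjes integrator associated with an increasing continuous function `φ` on `[0,a]`
(extended to all of `ℝ` as a constant outside `[0,a]`).  Its Lebesgue–Stieltjes measure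
realizes the integrals `∫₀^a ⋯ dφ(t)`. -/
def stieltjesOfOn (φ : ℝ → ℝ) (a : ℝ) : StieltjesFunction ℝ :=
  if h : 0 ≤ a ∧ MonotoneOn φ (Set.Icc 0 a) ∧ ContinuousOn φ (Set.Icc 0 a) then
    { toFun := fun t => φ (clampIcc a t)
      mono' := fun s t hst =>
        h.2.1 (clampIcc_mem a s h.1) (clampIcc_mem a t h.1) (clampIcc_mono a hst)
      right_continuous' := fun t =>
        ((h.2.2.comp_continuous (clampIcc_continuous a)
          (fun x => clampIcc_mem a x h.1)).continuousAt).continuousWithinAt }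
  else StieltjesFunction.id

/-- The Lorentz space functional `‖f‖_{Λ(φ)} = ∫₀^a f*(t) dφ(t)` (with values in `ℝ≥0∞`). -/
def eLorentzNorm {E : Type*} [NormedAddCommGroup E] (φ : ℝ → ℝ) (a : ℝ) (f : ℝ → E) : ℝ≥0∞ :=
  ∫⁻ t in Set.Ioc (0:ℝ) a, ENNReal.ofReal (rearr a f t) ∂(stieltjesOfOn φ a).measure

/-- Membership in the Lorentz space `Λ(φ)[0,a]`. -/
def MemLorentz {E : Type*} [NormedAddCommGroup E] [MeasurableSpace E]
    (φ : ℝ → ℝ) (a : ℝ) (f : ℝ → E) : Prop :=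
  Measurable f ∧ eLorentzNorm φ a f < ⊤

/-- The Hardy–Lorentz space functional
`‖f‖_{H(Λ(φ))} = sup_{0 ≤ r < 1} ‖t ↦ f (r e^{it})‖_{Λ(φ)}` for functions on the unit disk. -/
def eHLNorm (φ : ℝ → ℝ) (f : ℂ → ℂ) : ℝ≥0∞ :=
  ⨆ r ∈ Set.Ico (0:ℝ) 1,
    eLorentzNorm φ (2 * Real.pi)
      (fun t : ℝ => f (Complex.ofReal r * Complex.exp (Complex.I * Complex.ofReal t)))

/-- The classical `H¹` functional `‖f‖_{H¹} = sup_{0 ≤ r < 1} (1/(2π)) ∫₀^{2π} |f(r e^{it})| dt`. -/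
def eH1Norm (f : ℂ → ℂ) : ℝ≥0∞ :=
  ⨆ r ∈ Set.Ico (0:ℝ) 1,
    (ENNReal.ofReal (2 * Real.pi))⁻¹ *
      ∫⁻ t in Set.Ioc (0:ℝ) (2 * Real.pi),
        ENNReal.ofReal ‖f (Complex.ofReal r * Complex.exp (Complex.I * Complex.ofReal t))‖

/-- `fb` is the boundary (radial limit) function of `f`: for a.e. `t ∈ [0,2π]`,
`f(r e^{it}) → fb t` as `r → 1⁻`.  (For `f ∈ H¹` such a function exists and coincides a.e.
with the nontangential limit `f̃`.) -/
def HasRadialLimits (f : ℂ → ℂ) (fb : ℝ → ℂ) : Prop :=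
  ∀ᵐ t ∂(volume.restrict (Set.Icc (0:ℝ) (2 * Real.pi))),
    Filter.Tendsto (fun r : ℝ => f (Complex.ofReal r * Complex.exp (Complex.I * Complex.ofReal t)))
      (nhdsWithin 1 (Set.Iio 1)) (nhds (fb t))

/-- `f` (with boundary function `fb`) is an outer function:
`f` is non-null and `ln |f 0| = (1/(2π)) ∫₀^{2π} ln |fb s| ds`. -/
def IsOuter (f : ℂ → ℂ) (fb : ℝ → ℂ) : Prop :=
  (∃ z ∈ Metric.ball (0:ℂ) 1, f z ≠ 0) ∧
    Real.log ‖f 0‖ =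
      (1 / (2 * Real.pi)) * ∫ s in Set.Ioc (0:ℝ) (2 * Real.pi), Real.log ‖fb s‖

/-- The set `E₊ = {t ∈ [0,a] : h t > 0}`. -/
def posSet (a : ℝ) (h : ℝ → ℝ) : Set ℝ := {t ∈ Set.Icc (0:ℝ) a | 0 < h t}

/-- The set `E₋ = {t ∈ [0,a] : h t < 0}`. -/
def negSet (a : ℝ) (h : ℝ → ℝ) : Set ℝ := {t ∈ Set.Icc (0:ℝ) a | h t < 0}

/-!
Choose the height `l` at which `∫₀^a min(f*, l) dφ = 1/2`. For increasing continuous `h` with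
`h 0 = 0`, the rearrangement of `h ∘ |f|` is `h ∘ f*`; hence the perturbation
`g = (2 min(1, l/|f|) - 1) f` makes `f + g` and `f - g` have rearrangements `2 min(f*, l)` and
`2 (f* - l)⁺`, so both have norm `2 · 1/2 = 1`. Extremality forces `g = 0`, i.e. `|f|` takes only
the values `0` and `c = 2l`. Then `f* = c χ_(0, m E)` with `E = {f ≠ 0}`, so
`1 = ‖f‖ = c φ(m E)`, and `f = (f/|f|) / φ(m E) · χ_E`.
-/

section Rearrangement

variable {E : Type*} [NormedAddCommGroup E] {a t τ : ℝ} {f F : ℝ → E} {h : ℝ → ℝ}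

lemma distrib_antitone (a : ℝ) (f : ℝ → E) : Antitone (distrib a f) :=
  fun _ _ hle => measure_mono fun _ hs => ⟨hs.1, hle.trans_lt hs.2⟩

lemma distrib_ne_top (a : ℝ) (f : ℝ → E) (τ : ℝ) : distrib a f τ ≠ ⊤ :=
  (measure_lt_top_of_subset (fun _ hs => hs.1) measure_Icc_lt_top.ne).ne

lemma rearr_nonneg (a : ℝ) (f : ℝ → E) (t : ℝ) : 0 ≤ rearr a f t :=
  Real.sInf_nonneg fun _ hτ => hτ.1

lemma rearr_le_of_distrib_le (hτ : 0 ≤ τ) (hle : distrib a f τ ≤ ENNReal.ofReal t) :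
    rearr a f t ≤ τ :=
  csInf_le ⟨0, fun _ hx => hx.1⟩ ⟨hτ, hle⟩

lemma lt_distrib_of_lt_rearr (hτ : 0 ≤ τ) (hlt : τ < rearr a f t) :
    ENNReal.ofReal t < distrib a f τ :=
  lt_of_not_ge fun hle => (rearr_le_of_distrib_le hτ hle).not_gt hlt

lemma distrib_comp_le (hm : Monotone h) (hF : ∀ s ∈ Icc (0:ℝ) a, ‖F s‖ = h ‖f s‖) (τ : ℝ) :
    distrib a F (h τ) ≤ distrib a f τ :=
  measure_mono fun s hs => ⟨hs.1, hm.reflect_lt ((hF s hs.1).symm ▸ hs.2)⟩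

/-- The witness is the last point `x ≤ r` with `h x ≤ τ`. -/
lemma exists_distrib_le_distrib_comp (hm : Monotone h) (hc : Continuous h) (h0 : h 0 = 0)
    (hF : ∀ s ∈ Icc (0:ℝ) a, ‖F s‖ = h ‖f s‖) {r : ℝ} (hr : 0 ≤ r) (hτ0 : 0 ≤ τ)
    (hτ : τ < h r) : ∃ x, 0 ≤ x ∧ x < r ∧ distrib a f x ≤ distrib a F τ := by
  set C := Icc 0 r ∩ h ⁻¹' Iic τ
  have hCne : C.Nonempty := ⟨0, ⟨le_rfl, hr⟩, by simpa [h0] using hτ0⟩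
  have hCbdd : BddAbove C := ⟨r, fun x hx => hx.1.2⟩
  have hxC : sSup C ∈ C :=
    (isClosed_Icc.inter (isClosed_Iic.preimage hc)).csSup_mem hCne hCbdd
  refine ⟨sSup C, hxC.1.1, lt_of_le_of_ne hxC.1.2 fun he => (he ▸ hxC.2).not_gt hτ, ?_⟩
  refine measure_mono fun s hs => ⟨hs.1, (hF s hs.1).symm ▸ lt_of_not_ge fun hle => ?_⟩
  rcases le_or_gt ‖f s‖ r with hsr | hsr
  · exact (le_csSup hCbdd ⟨⟨norm_nonneg _, hsr⟩, hle⟩).not_gt hs.2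
  · exact ((hm hsr.le).trans hle).not_gt hτ

section Measurable

variable [MeasurableSpace E] [OpensMeasurableSpace E]

lemma measurableSet_distrib_set (hf : Measurable f) (a τ : ℝ) :
    MeasurableSet {s ∈ Icc (0:ℝ) a | τ < ‖f s‖} :=
  measurableSet_Icc.inter (measurableSet_lt measurable_const hf.norm)

lemma tendsto_distrib_atTop (hf : Measurable f) (a : ℝ) :
    Tendsto (fun n : ℕ => distrib a f n) atTop (𝓝 0) := by
  have hanti : Antitone fun n : ℕ => {s ∈ Icc (0:ℝ) a | (n:ℝ) < ‖f s‖} :=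
    fun _ _ hnm _ hs => ⟨hs.1, (Nat.cast_le.2 hnm).trans_lt hs.2⟩
  have hempty : (⋂ n : ℕ, {s ∈ Icc (0:ℝ) a | (n:ℝ) < ‖f s‖}) = ∅ :=
    iInter_eq_empty_iff.2 fun s =>
      let ⟨n, hn⟩ := exists_nat_ge ‖f s‖
      ⟨n, fun hs => hn.not_gt hs.2⟩
  have := tendsto_measure_iInter_atTop (μ := volume)
    (fun n : ℕ => (measurableSet_distrib_set hf a n).nullMeasurableSet) hanti
    ⟨0, by rw [Nat.cast_zero]; exact distrib_ne_top a f 0⟩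
  rwa [hempty, measure_empty] at this

lemma rearr_set_nonempty (hf : Measurable f) (a : ℝ) (ht : 0 < t) :
    {τ : ℝ | 0 ≤ τ ∧ distrib a f τ ≤ ENNReal.ofReal t}.Nonempty :=
  let ⟨n, hn⟩ := ((tendsto_distrib_atTop hf a).eventually_lt_const
    (ENNReal.ofReal_pos.2 ht)).exists
  ⟨n, n.cast_nonneg, hn.le⟩

lemma distrib_rearr_le (hf : Measurable f) (a : ℝ) (ht : 0 < t) :
    distrib a f (rearr a f t) ≤ ENNReal.ofReal t := by
  set r := rearr a f t
  have hmono : Monotone fun n : ℕ => {s ∈ Icc (0:ℝ) a | r + 1 / (n + 1) < ‖f s‖} :=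
    fun _ _ hnm _ hs => ⟨hs.1, lt_of_le_of_lt (by gcongr) hs.2⟩
  have hunion : {s ∈ Icc (0:ℝ) a | r < ‖f s‖}
      = ⋃ n : ℕ, {s ∈ Icc (0:ℝ) a | r + 1 / (n + 1) < ‖f s‖} := by
    ext s
    simp only [mem_iUnion, mem_sep_iff]
    constructor
    · rintro ⟨hs, hlt⟩
      obtain ⟨n, hn⟩ := exists_nat_one_div_lt (sub_pos.2 hlt)
      exact ⟨n, hs, by linarith⟩
    · rintro ⟨n, hs, hlt⟩
      exact ⟨hs, lt_of_le_of_lt (le_add_of_nonneg_right (by positivity)) hlt⟩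
  have hstep : ∀ n : ℕ, distrib a f (r + 1 / (n + 1)) ≤ ENNReal.ofReal t := fun n =>
    let ⟨_, hτ, hlt⟩ := Real.lt_sInf_add_pos (rearr_set_nonempty hf a ht)
      (by positivity : (0:ℝ) < 1 / (n + 1))
    (distrib_antitone a f hlt.le).trans hτ.2
  calc distrib a f r = ⨆ n : ℕ, distrib a f (r + 1 / (n + 1)) := by
        rw [distrib, hunion, hmono.measure_iUnion]; rfl
    _ ≤ ENNReal.ofReal t := iSup_le hstep

lemma rearr_antitoneOn (hf : Measurable f) (a : ℝ) : AntitoneOn (rearr a f) (Ioi 0) :=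
  fun _ ht _ _ htt' => csInf_le_csInf ⟨0, fun _ hx => hx.1⟩ (rearr_set_nonempty hf a ht)
    fun _ hτ => ⟨hτ.1, hτ.2.trans (ENNReal.ofReal_le_ofReal htt')⟩

lemma aemeasurable_rearr (hf : Measurable f) (a : ℝ) (μ : Measure ℝ) :
    AEMeasurable (rearr a f) (μ.restrict (Ioc 0 a)) :=
  aemeasurable_restrict_of_antitoneOn measurableSet_Ioc
    ((rearr_antitoneOn hf a).mono Ioc_subset_Ioi_self)

lemma rearr_comp_of_norm_eq (hf : Measurable f) (hm : Monotone h) (hc : Continuous h)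
    (h0 : h 0 = 0) (hF : ∀ s ∈ Icc (0:ℝ) a, ‖F s‖ = h ‖f s‖) (ht : 0 < t) :
    rearr a F t = h (rearr a f t) := by
  have hr := rearr_nonneg a f t
  have hhr : 0 ≤ h (rearr a f t) := h0 ▸ hm hr
  have hmem := (distrib_comp_le hm hF (rearr a f t)).trans (distrib_rearr_le hf a ht)
  refine le_antisymm (rearr_le_of_distrib_le hhr hmem) (le_csInf ⟨_, hhr, hmem⟩ ?_)
  rintro τ ⟨hτ0, hτ⟩
  by_contra! hlt
  obtain ⟨x, hx0, hxr, hx⟩ := exists_distrib_le_distrib_comp hm hc h0 hF hr hτ0 hlt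
  exact (lt_distrib_of_lt_rearr hx0 hxr).not_ge (hx.trans hτ)

end Measurable

end Rearrangement

section Stieltjes

variable {a : ℝ} {φ : ℝ → ℝ}

lemma clampIcc_of_mem {x : ℝ} (hx : x ∈ Icc (0:ℝ) a) : clampIcc a x = x := by
  rw [clampIcc, max_eq_left hx.1, min_eq_left hx.2]

lemma stieltjesOfOn_eq_comp_clampIcc (ha : 0 ≤ a) (hmono : MonotoneOn φ (Icc 0 a))
    (hcont : ContinuousOn φ (Icc 0 a)) : ⇑(stieltjesOfOn φ a) = φ ∘ clampIcc a := by
  ext x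
  rw [stieltjesOfOn, dif_pos ⟨ha, hmono, hcont⟩]
  rfl

lemma stieltjesOfOn_measure_Ioo (ha : 0 ≤ a) (hmono : MonotoneOn φ (Icc 0 a))
    (hcont : ContinuousOn φ (Icc 0 a)) {x : ℝ} (hx : x ∈ Icc (0:ℝ) a) :
    (stieltjesOfOn φ a).measure (Ioo 0 x) = ENNReal.ofReal (φ x - φ 0) := by
  have hφ := stieltjesOfOn_eq_comp_clampIcc ha hmono hcont
  have hc : Continuous (stieltjesOfOn φ a) :=
    hφ ▸ hcont.comp_continuous (clampIcc_continuous a) fun x => clampIcc_mem a x ha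
  rw [StieltjesFunction.measure_Ioo, leftLim_eq_of_tendsto
    ((hc.tendsto x).mono_left nhdsWithin_le_nhds), hφ, Function.comp_apply,
    Function.comp_apply, clampIcc_of_mem hx, clampIcc_of_mem (left_mem_Icc.2 ha)]

end Stieltjes

section Truncation

variable {E : Type*} [NormedAddCommGroup E] {a : ℝ} {φ : ℝ → ℝ} {f : ℝ → E}

def truncLorentz (φ : ℝ → ℝ) (a : ℝ) (f : ℝ → E) (l : ℝ) : ℝ≥0∞ :=
  ∫⁻ t in Ioc 0 a, ENNReal.ofReal (min (rearr a f t) l) ∂(stieltjesOfOn φ a).measure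

lemma truncLorentz_zero (φ : ℝ → ℝ) (a : ℝ) (f : ℝ → E) : truncLorentz φ a f 0 = 0 := by
  simp [truncLorentz, rearr_nonneg]

lemma truncLorentz_le_add (φ : ℝ → ℝ) (a : ℝ) (f : ℝ → E) (l l' : ℝ) :
    truncLorentz φ a f l' ≤ truncLorentz φ a f l +
      ENNReal.ofReal (dist l' l) * (stieltjesOfOn φ a).measure (Ioc 0 a) := by
  have hmin : ∀ r, min r l' ≤ min r l + dist l' l := fun r => by
    have := abs_min_sub_min_le_max r l' r l
    rw [sub_self, abs_zero, max_eq_right (abs_nonneg _)] at this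
    linarith [le_abs_self (min r l' - min r l), Real.dist_eq l' l]
  calc truncLorentz φ a f l'
      ≤ ∫⁻ t in Ioc 0 a, (ENNReal.ofReal (min (rearr a f t) l) + ENNReal.ofReal (dist l' l))
          ∂(stieltjesOfOn φ a).measure :=
        lintegral_mono fun t => (ENNReal.ofReal_le_ofReal (hmin _)).trans ENNReal.ofReal_add_le
    _ = _ := by rw [lintegral_add_right _ measurable_const, setLIntegral_const]; rfl

lemma truncLorentz_ne_top (φ : ℝ → ℝ) (a : ℝ) (f : ℝ → E) (l : ℝ) :
    truncLorentz φ a f l ≠ ⊤ :=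
  ((truncLorentz_le_add φ a f 0 l).trans_lt (by
    rw [truncLorentz_zero, zero_add]
    exact ENNReal.mul_lt_top ENNReal.ofReal_lt_top measure_Ioc_lt_top)).ne

lemma lipschitzWith_truncLorentz_toReal (φ : ℝ → ℝ) (a : ℝ) (f : ℝ → E) :
    LipschitzWith ((stieltjesOfOn φ a).measure (Ioc 0 a)).toNNReal
      fun l => (truncLorentz φ a f l).toReal := by
  refine LipschitzWith.of_le_add_mul _ fun l' l => ?_
  have hM : (stieltjesOfOn φ a).measure (Ioc 0 a) ≠ ⊤ := measure_Ioc_lt_top.ne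
  have := ENNReal.toReal_mono (ENNReal.add_ne_top.2 ⟨truncLorentz_ne_top φ a f l,
    ENNReal.mul_ne_top ENNReal.ofReal_ne_top hM⟩) (truncLorentz_le_add φ a f l l')
  rwa [ENNReal.toReal_add (truncLorentz_ne_top φ a f l)
    (ENNReal.mul_ne_top ENNReal.ofReal_ne_top hM), ENNReal.toReal_mul,
    ENNReal.toReal_ofReal dist_nonneg, mul_comm] at this

variable [MeasurableSpace E] [OpensMeasurableSpace E]

lemma iSup_truncLorentz_natCast (hf : Measurable f) (φ : ℝ → ℝ) (a : ℝ) :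
    ⨆ n : ℕ, truncLorentz φ a f n = eLorentzNorm φ a f := by
  have hmeas := aemeasurable_rearr hf a (stieltjesOfOn φ a).measure
  simp only [truncLorentz]
  rw [eLorentzNorm, ← lintegral_iSup'
    (fun n => (hmeas.min aemeasurable_const).ennreal_ofReal)
    (ae_of_all _ fun _ _ _ hnm =>
      ENNReal.ofReal_le_ofReal (min_le_min le_rfl (Nat.cast_le.2 hnm)))]
  refine lintegral_congr fun t => le_antisymm
    (iSup_le fun n => ENNReal.ofReal_le_ofReal (min_le_left _ _)) ?_
  obtain ⟨n, hn⟩ := exists_nat_ge (rearr a f t)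
  exact le_iSup_of_le n (by rw [min_eq_left hn])

lemma exists_truncLorentz_eq (hf : Measurable f) {y : ℝ≥0∞} (hy : y < eLorentzNorm φ a f) :
    ∃ l, 0 ≤ l ∧ truncLorentz φ a f l = y := by
  obtain ⟨n, hn⟩ := lt_iSup_iff.1 (hy.trans_eq (iSup_truncLorentz_natCast hf φ a).symm)
  have hy' : y.toReal ∈ Icc (truncLorentz φ a f 0).toReal (truncLorentz φ a f n).toReal := by
    rw [truncLorentz_zero]
    exact ⟨ENNReal.toReal_nonneg, ENNReal.toReal_mono (truncLorentz_ne_top φ a f n) hn.le⟩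
  obtain ⟨l, hl, hly⟩ := intermediate_value_Icc n.cast_nonneg
    (lipschitzWith_truncLorentz_toReal φ a f).continuous.continuousOn hy'
  exact ⟨l, hl.1,
    (ENNReal.toReal_eq_toReal_iff' (truncLorentz_ne_top φ a f l) hy.ne_top).1 hly⟩

end Truncation

section LevelShift

lemma min_one_div_mul {l n : ℝ} (hl : 0 ≤ l) (hn : 0 ≤ n) : min 1 (l / n) * n = min n l := by
  rcases hn.eq_or_lt with h0 | h0
  · simp [← h0, min_eq_left hl]
  · rw [min_mul_of_nonneg _ _ h0.le, one_mul, div_mul_cancel₀ _ h0.ne']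

variable {E : Type*} [NormedAddCommGroup E] [NormedSpace ℝ E] {l : ℝ}

def levelShift (l : ℝ) (x : E) : E := (2 * min 1 (l / ‖x‖) - 1) • x

lemma norm_add_levelShift (hl : 0 ≤ l) (x : E) : ‖x + levelShift l x‖ = 2 * min ‖x‖ l := by
  have hm : 0 ≤ min 1 (l / ‖x‖) := le_min zero_le_one (by positivity)
  have hx : x + levelShift l x = (2 * min 1 (l / ‖x‖)) • x := by rw [levelShift]; module
  rw [hx, norm_smul, Real.norm_eq_abs, abs_of_nonneg (by positivity), mul_assoc,
    min_one_div_mul hl (norm_nonneg x)]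

lemma norm_sub_levelShift (hl : 0 ≤ l) (x : E) :
    ‖x - levelShift l x‖ = 2 * max (‖x‖ - l) 0 := by
  have hm : min 1 (l / ‖x‖) ≤ 1 := min_le_left _ _
  have hx : x - levelShift l x = (2 - 2 * min 1 (l / ‖x‖)) • x := by rw [levelShift]; module
  rw [hx, norm_smul, Real.norm_eq_abs, abs_of_nonneg (by linarith), sub_mul, mul_assoc,
    min_one_div_mul hl (norm_nonneg x)]
  rcases le_total ‖x‖ l with h | h
  · rw [min_eq_left h, max_eq_right (by linarith)]; ring
  · rw [min_eq_right h, max_eq_left (by linarith)]; ring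

lemma eq_zero_or_norm_eq_of_levelShift_eq_zero {x : E} (h : levelShift l x = 0) :
    x = 0 ∨ ‖x‖ = 2 * l := by
  rcases smul_eq_zero.1 h with hc | hx
  · right
    rcases min_choice 1 (l / ‖x‖) with hmin | hmin <;> rw [hmin] at hc
    · norm_num at hc
    · have hx : ‖x‖ ≠ 0 := fun h0 => by simp [h0] at hc
      linarith [(div_eq_iff hx).1 (by linarith : l / ‖x‖ = 1 / 2)]
  · exact Or.inl hx

end LevelShift

section LevelShiftLorentz

variable {E : Type*} [NormedAddCommGroup E] {a : ℝ} {φ : ℝ → ℝ} {f F : ℝ → E} {h : ℝ → ℝ}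

lemma eLorentzNorm_eq_of_norm_eq_comp [MeasurableSpace E] [OpensMeasurableSpace E]
    (hf : Measurable f) (hm : Monotone h) (hc : Continuous h) (h0 : h 0 = 0)
    (hF : ∀ s ∈ Icc (0:ℝ) a, ‖F s‖ = h ‖f s‖) :
    eLorentzNorm φ a F =
      ∫⁻ t in Ioc 0 a, ENNReal.ofReal (h (rearr a f t)) ∂(stieltjesOfOn φ a).measure :=
  setLIntegral_congr_fun measurableSet_Ioc fun _ ht => by
    rw [rearr_comp_of_norm_eq hf hm hc h0 hF ht.1]

variable [NormedSpace ℝ E] [MeasurableSpace E] [OpensMeasurableSpace E] {l : ℝ}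

lemma eLorentzNorm_add_levelShift (hf : Measurable f) (hl : 0 ≤ l) :
    eLorentzNorm φ a (fun s => f s + levelShift l (f s)) = 2 * truncLorentz φ a f l := by
  have hm : Monotone fun x : ℝ => 2 * min x l := fun x y hxy => by dsimp only; gcongr
  have hc : Continuous fun x : ℝ => 2 * min x l := by fun_prop
  rw [eLorentzNorm_eq_of_norm_eq_comp hf hm hc (by simp [hl])
    fun s _ => norm_add_levelShift hl (f s), truncLorentz,
    ← lintegral_const_mul' _ _ (by simp)]
  simp_rw [ENNReal.ofReal_mul zero_le_two, ENNReal.ofReal_ofNat]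

lemma eLorentzNorm_sub_levelShift (hf : Measurable f) (hl : 0 ≤ l) :
    eLorentzNorm φ a (fun s => f s - levelShift l (f s)) =
      2 * (eLorentzNorm φ a f - truncLorentz φ a f l) := by
  have hsplit : truncLorentz φ a f l + ∫⁻ t in Ioc 0 a,
      ENNReal.ofReal (max (rearr a f t - l) 0) ∂(stieltjesOfOn φ a).measure =
      eLorentzNorm φ a f := by
    rw [truncLorentz, ← lintegral_add_left'
      ((aemeasurable_rearr hf a _).min aemeasurable_const).ennreal_ofReal]
    refine lintegral_congr fun t => ?_
    rw [← ENNReal.ofReal_add (le_min (rearr_nonneg a f t) hl) (le_max_right _ _)]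
    rcases le_total (rearr a f t) l with hle | hle
    · rw [min_eq_left hle, max_eq_right (by linarith), add_zero]
    · rw [min_eq_right hle, max_eq_left (by linarith), add_sub_cancel]
  have hm : Monotone fun x : ℝ => 2 * max (x - l) 0 := fun x y hxy => by dsimp only; gcongr
  have hc : Continuous fun x : ℝ => 2 * max (x - l) 0 := by fun_prop
  rw [← hsplit, ENNReal.add_sub_cancel_left (truncLorentz_ne_top φ a f l),
    eLorentzNorm_eq_of_norm_eq_comp hf hm hc (by simp [hl])
    fun s _ => norm_sub_levelShift hl (f s), ← lintegral_const_mul' _ _ (by simp)]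
  simp_rw [ENNReal.ofReal_mul zero_le_two, ENNReal.ofReal_ofNat]

end LevelShiftLorentz

lemma exists_ae_eq_zero_or_norm_eq_of_extreme {a : ℝ} {φ : ℝ → ℝ} {f : ℝ → ℂ}
    (hf : Measurable f) (hnorm : eLorentzNorm φ a f = 1)
    (hext : ∀ g : ℝ → ℂ, Measurable g →
      eLorentzNorm φ a (f + g) ≤ 1 → eLorentzNorm φ a (f - g) ≤ 1 →
      g =ᵐ[volume.restrict (Icc (0:ℝ) a)] 0) :
    ∃ c, 0 < c ∧ ∀ᵐ s ∂volume.restrict (Icc (0:ℝ) a), f s = 0 ∨ ‖f s‖ = c := by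
  obtain ⟨l, hl, hhalf⟩ := exists_truncLorentz_eq hf
    (hnorm ▸ ENNReal.inv_lt_one.2 (by norm_num) : (2:ℝ≥0∞)⁻¹ < eLorentzNorm φ a f)
  have hl0 : 0 < l := hl.lt_of_ne fun h0 => by
    rw [← h0, truncLorentz_zero] at hhalf
    exact ENNReal.inv_ne_zero.2 ENNReal.ofNat_ne_top hhalf.symm
  have hg : Measurable fun s => levelShift l (f s) :=
    ((measurable_const.min (measurable_const.div hf.norm)).const_mul 2 |>.sub_const 1).smul hf
  have hhalf_mul : (2:ℝ≥0∞) * 2⁻¹ = 1 :=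
    ENNReal.mul_inv_cancel two_ne_zero ENNReal.ofNat_ne_top
  have hplus : eLorentzNorm φ a (f + fun s => levelShift l (f s)) ≤ 1 :=
    (eLorentzNorm_add_levelShift hf hl).trans_le (by rw [hhalf, hhalf_mul])
  have hminus : eLorentzNorm φ a (f - fun s => levelShift l (f s)) ≤ 1 :=
    (eLorentzNorm_sub_levelShift hf hl).trans_le
      (by rw [hhalf, hnorm, ENNReal.one_sub_inv_two, hhalf_mul])
  refine ⟨2 * l, by positivity, ?_⟩
  filter_upwards [hext _ hg hplus hminus] with s hs
  exact eq_zero_or_norm_eq_of_levelShift_eq_zero hs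

section TwoValued

variable {E : Type*} [NormedAddCommGroup E] {a c t τ : ℝ} {φ : ℝ → ℝ} {f : ℝ → E}

lemma distrib_eq_distrib_zero_of_lt
    (hae : ∀ᵐ s ∂volume.restrict (Icc (0:ℝ) a), f s = 0 ∨ ‖f s‖ = c)
    (hτ0 : 0 ≤ τ) (hτc : τ < c) : distrib a f τ = distrib a f 0 := by
  refine measure_congr (eventuallyEq_set.2 ?_)
  filter_upwards [(ae_restrict_iff' measurableSet_Icc).1 hae] with s hs
  refine and_congr_right fun hsI => ?_
  rcases hs hsI with h | h <;> simp only [h, norm_zero, lt_self_iff_false, iff_false, not_lt,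
    hτ0, hτc, hτ0.trans_lt hτc]

lemma distrib_eq_zero_of_le (hae : ∀ᵐ s ∂volume.restrict (Icc (0:ℝ) a), f s = 0 ∨ ‖f s‖ = c)
    (hτ0 : 0 ≤ τ) (hcτ : c ≤ τ) : distrib a f τ = 0 := by
  refine measure_eq_zero_iff_ae_notMem.2 ?_
  filter_upwards [(ae_restrict_iff' measurableSet_Icc).1 hae] with s hs
  rintro ⟨hsI, hlt⟩
  rcases hs hsI with h | h
  · rw [h, norm_zero] at hlt; linarith
  · linarith

lemma rearr_eq_ite_of_ae (hae : ∀ᵐ s ∂volume.restrict (Icc (0:ℝ) a), f s = 0 ∨ ‖f s‖ = c)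
    (hc : 0 < c) (ht : 0 ≤ t) :
    rearr a f t = if t < (distrib a f 0).toReal then c else 0 := by
  split_ifs with htd
  · have hc_mem : distrib a f c ≤ ENNReal.ofReal t := by
      rw [distrib_eq_zero_of_le hae hc.le le_rfl]; exact zero_le
    have htD := (ENNReal.ofReal_lt_iff_lt_toReal ht (distrib_ne_top a f 0)).2 htd
    refine le_antisymm (rearr_le_of_distrib_le hc.le hc_mem) (le_csInf ⟨c, hc.le, hc_mem⟩ ?_)
    rintro τ ⟨hτ0, hτ⟩
    by_contra! hτc
    rw [distrib_eq_distrib_zero_of_lt hae hτ0 hτc] at hτ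
    exact hτ.not_gt htD
  · exact le_antisymm (rearr_le_of_distrib_le le_rfl
      ((ENNReal.le_ofReal_iff_toReal_le (distrib_ne_top a f 0) ht).2 (not_lt.1 htd)))
      (rearr_nonneg a f t)

lemma eLorentzNorm_eq_of_ae (ha : 0 ≤ a) (hmono : MonotoneOn φ (Icc 0 a))
    (hcont : ContinuousOn φ (Icc 0 a))
    (hae : ∀ᵐ s ∂volume.restrict (Icc (0:ℝ) a), f s = 0 ∨ ‖f s‖ = c) (hc : 0 < c) :
    eLorentzNorm φ a f = ENNReal.ofReal (c * (φ (distrib a f 0).toReal - φ 0)) := by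
  set d := (distrib a f 0).toReal
  have hd : d ∈ Icc 0 a := ⟨ENNReal.toReal_nonneg, by
    have := ENNReal.toReal_mono (by simp) (measure_mono (μ := volume)
      (sep_subset (Icc (0:ℝ) a) fun s => (0:ℝ) < ‖f s‖))
    rwa [Real.volume_Icc, sub_zero, ENNReal.toReal_ofReal ha] at this⟩
  calc eLorentzNorm φ a f
      = ∫⁻ t in Ioc 0 a, (Ioo 0 d).indicator (fun _ => ENNReal.ofReal c) t
          ∂(stieltjesOfOn φ a).measure :=
        setLIntegral_congr_fun measurableSet_Ioc fun t ht => by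
          rw [rearr_eq_ite_of_ae hae hc ht.1.le]
          by_cases htd : t < d
          · rw [if_pos htd, indicator_of_mem (mem_Ioo.2 ⟨ht.1, htd⟩)]
          · rw [if_neg htd, indicator_of_notMem fun h => htd h.2, ENNReal.ofReal_zero]
    _ = ENNReal.ofReal c * (stieltjesOfOn φ a).measure (Ioo 0 d) := by
        rw [lintegral_indicator measurableSet_Ioo, Measure.restrict_restrict measurableSet_Ioo,
          inter_eq_left.2 (Ioo_subset_Ioc_self.trans (Ioc_subset_Ioc_right hd.2)),
          setLIntegral_const]
    _ = _ := by rw [stieltjesOfOn_measure_Ioo ha hmono hcont hd, ← ENNReal.ofReal_mul hc.le]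

end TwoValued

theorem extreme_point_form_general (a : ℝ) (ha : 0 < a) (φ : ℝ → ℝ)
    (hcont : ContinuousOn φ (Set.Icc 0 a))
    (hmono : MonotoneOn φ (Set.Icc 0 a))
    (hφ0 : φ 0 = 0)
    (f : ℝ → ℂ) (hf : Measurable f)
    (hnorm : eLorentzNorm φ a f = 1)
    (hext : ∀ g : ℝ → ℂ, Measurable g →
      eLorentzNorm φ a (f + g) ≤ 1 → eLorentzNorm φ a (f - g) ≤ 1 →
      g =ᵐ[volume.restrict (Set.Icc (0:ℝ) a)] 0) :
    ∃ E : Set ℝ, MeasurableSet E ∧ E ⊆ Set.Icc (0:ℝ) a ∧ 0 < volume E ∧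
      ∃ ε : ℝ → ℂ, Measurable ε ∧
        (∀ᵐ t ∂(volume.restrict (Set.Icc (0:ℝ) a)), ‖ε t‖ = 1) ∧
        (∀ᵐ t ∂(volume.restrict (Set.Icc (0:ℝ) a)),
          f t = Set.indicator E (fun s => ε s / (φ ((volume E).toReal) : ℂ)) t) := by
  obtain ⟨c, hc, hae⟩ := exists_ae_eq_zero_or_norm_eq_of_extreme hf hnorm hext
  set E := {s ∈ Icc (0:ℝ) a | (0:ℝ) < ‖f s‖}
  have hcφ : c * φ (volume E).toReal = 1 := by
    have := (eLorentzNorm_eq_of_ae ha.le hmono hcont hae hc).symm.trans hnorm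
    rw [hφ0, sub_zero] at this
    exact ENNReal.ofReal_eq_one.1 this
  have hE : 0 < volume E := pos_of_ne_zero fun h0 => by simp [h0, hφ0] at hcφ
  refine ⟨E, measurableSet_distrib_set hf a 0, fun s hs => hs.1, hE,
    fun s => Complex.exp ((f s).arg * Complex.I),
    (Complex.measurable_arg.comp hf).complex_ofReal.mul_const _ |>.cexp,
    ae_of_all _ fun s => Complex.norm_exp_ofReal_mul_I _, ?_⟩
  filter_upwards [hae, ae_restrict_mem measurableSet_Icc] with s hs hsI
  rcases hs with h0 | hfs
  · rw [indicator_of_notMem fun hsE => hsE.2.ne' (norm_eq_zero.2 h0), h0]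
  · have hφE : (φ (volume E).toReal : ℂ) ≠ 0 :=
      Complex.ofReal_ne_zero.2 (right_ne_zero_of_mul_eq_one hcφ)
    rw [indicator_of_mem (show s ∈ E from ⟨hsI, hfs ▸ hc⟩), eq_div_iff hφE]
    conv_lhs => rw [← Complex.norm_mul_exp_arg_mul_I (f s)]
    rw [hfs, mul_right_comm, ← Complex.ofReal_mul, hcφ, Complex.ofReal_one, one_mul]

/-- Let `φ` be increasing, concave, continuous on `[0,a]` with
`φ 0 = 0`, `φ a = 1`.  Every extreme point `f` of the closed unit ball of `Λ(φ)[0,a]`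
has the form `f = (ε / φ(m E)) χ_E` with `E ⊆ [0,a]` measurable of positive measure and
`|ε| = 1` a.e. -/
theorem extreme_point_form (a : ℝ) (ha : 0 < a) (φ : ℝ → ℝ)
    (hconc : ConcaveOn ℝ (Set.Icc 0 a) φ)
    (hcont : ContinuousOn φ (Set.Icc 0 a))
    (hmono : MonotoneOn φ (Set.Icc 0 a))
    (hφ0 : φ 0 = 0) (hφa : φ a = 1)
    (f : ℝ → ℂ) (hf : Measurable f)
    (hnorm : eLorentzNorm φ a f = 1)
    (hext : ∀ g : ℝ → ℂ, Measurable g →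
      eLorentzNorm φ a (f + g) ≤ 1 → eLorentzNorm φ a (f - g) ≤ 1 →
      g =ᵐ[volume.restrict (Set.Icc (0:ℝ) a)] 0) :
    ∃ E : Set ℝ, MeasurableSet E ∧ E ⊆ Set.Icc (0:ℝ) a ∧ 0 < volume E ∧
      ∃ ε : ℝ → ℂ, Measurable ε ∧
        (∀ᵐ t ∂(volume.restrict (Set.Icc (0:ℝ) a)), ‖ε t‖ = 1) ∧
        (∀ᵐ t ∂(volume.restrict (Set.Icc (0:ℝ) a)),
          f t = Set.indicator E (fun s => ε s / (φ ((volume E).toReal) : ℂ)) t) :=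
  extreme_point_form_general a ha φ hcont hmono hφ0 f hf hnorm hext

end
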